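/- arXiv:1605.00291 — 4 statements merged into one kernel-verified Lean document; each statement's English description precedes it below -/
import Mathlib

section
/- For all complex q with |q| < 1, the sum over n ≥ 0 of q^{n^2} (-q;q^2)_n / ((q^2;q^2)_n)^2 equals (-q;q^2)_∞ / (q^2;q^2)_∞, where (a;q)_n denotes the q-Pochhammer symbol ∏_{i=0}^{n-1}(1 - a q^i). -/
noncomputable def qPoch (a q : ℂ) (n : ℕ) : ℂ := ∏ i ∈ Finset.range n, (1 - a * q ^ i)

noncomputable def qPochInf (a q : ℂ) : ℂ := ∏' i : ℕ, (1 - a * q ^ i)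

/-! With `t_k = p^(k choose 2) ∏_{i<k} (p^(i+1) - b)`, the truncated sums
`∑_{k ≤ N} t_k / ((p;p)_k² (p;p)_{N-k})` equal `(b;p)_N / (p;p)_N²`: multiplied by
`(1 - p^(N+1))²`, the sum at `N + 1` is `(1 - b p^N)` times the sum at `N` up to a telescoping
(Wilf–Zeilberger) correction. As `N → ∞` the factors `1 / (p;p)_{N-k}` tend to `1 / (p;p)_∞` and
stay uniformly bounded, while `t_k` decays like `|p|^(k choose 2)`, so Tannery's theorem gives
`∑ t_k / (p;p)_k² = (b;p)_∞ / (p;p)_∞`. The theorem is the case `p = q²`, `b = -q`. -/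

open Finset Filter Topology

section QPochhammer

lemma qPoch_zero (a q : ℂ) : qPoch a q 0 = 1 := prod_range_zero _

lemma qPoch_succ (a q : ℂ) (n : ℕ) : qPoch a q (n + 1) = qPoch a q n * (1 - a * q ^ n) :=
  prod_range_succ _ _

lemma qPoch_self_succ (q : ℂ) (n : ℕ) : qPoch q q (n + 1) = qPoch q q n * (1 - q ^ (n + 1)) := by
  rw [qPoch_succ, pow_succ']

variable {q : ℂ}

lemma summable_norm_mul_pow (a : ℂ) (hq : ‖q‖ < 1) : Summable fun i : ℕ => ‖a * q ^ i‖ := by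
  simpa only [norm_mul, norm_pow] using
    (summable_geometric_of_lt_one (norm_nonneg q) hq).mul_left ‖a‖

lemma hasProd_qPochInf (a : ℂ) (hq : ‖q‖ < 1) :
    HasProd (fun i : ℕ => 1 - a * q ^ i) (qPochInf a q) := by
  have := multipliable_one_add_of_summable (f := fun i : ℕ => -(a * q ^ i))
    (by simpa only [norm_neg] using summable_norm_mul_pow a hq)
  simp only [← sub_eq_add_neg] at this
  exact this.hasProd

lemma tendsto_qPoch (a : ℂ) (hq : ‖q‖ < 1) : Tendsto (qPoch a q) atTop (𝓝 (qPochInf a q)) :=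
  (hasProd_qPochInf a hq).tendsto_prod_nat

lemma one_sub_mul_pow_ne_zero {a : ℂ} (ha : ‖a‖ < 1) (hq : ‖q‖ ≤ 1) (i : ℕ) :
    1 - a * q ^ i ≠ 0 := by
  intro h
  have : ‖a * q ^ i‖ < 1 := by
    rw [norm_mul, norm_pow]
    exact (mul_le_of_le_one_right (norm_nonneg a) (pow_le_one₀ (norm_nonneg q) hq)).trans_lt ha
  rw [← sub_eq_zero.1 h, norm_one] at this
  exact this.false

lemma qPoch_ne_zero {a : ℂ} (ha : ‖a‖ < 1) (hq : ‖q‖ ≤ 1) (n : ℕ) : qPoch a q n ≠ 0 :=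
  prod_ne_zero_iff.2 fun i _ => one_sub_mul_pow_ne_zero ha hq i

lemma qPochInf_ne_zero {a : ℂ} (ha : ‖a‖ < 1) (hq : ‖q‖ < 1) : qPochInf a q ≠ 0 := by
  have := tprod_one_add_ne_zero_of_summable (f := fun i : ℕ => -(a * q ^ i))
    (by simpa only [← sub_eq_add_neg] using one_sub_mul_pow_ne_zero ha hq.le)
    (by simpa only [norm_neg] using summable_norm_mul_pow a hq)
  rw [qPochInf]
  simpa only [← sub_eq_add_neg] using this

lemma exists_norm_inv_qPoch_le {a : ℂ} (ha : ‖a‖ < 1) (hq : ‖q‖ < 1) :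
    ∃ C, ∀ n, ‖(qPoch a q n)⁻¹‖ ≤ C := by
  have := Metric.isBounded_range_of_tendsto _
    ((tendsto_qPoch a hq).inv₀ (qPochInf_ne_zero ha hq))
  obtain ⟨C, hC⟩ := isBounded_iff_forall_norm_le.1 this
  exact ⟨C, fun n => hC _ ⟨n, rfl⟩⟩

lemma one_sub_pow_succ_ne_zero (hq : ‖q‖ < 1) (n : ℕ) : 1 - q ^ (n + 1) ≠ 0 := by
  simpa only [pow_succ'] using one_sub_mul_pow_ne_zero hq hq.le n

end QPochhammer

section QGaussLimit

variable {p : ℂ}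

/-- `(p/b; p)_n (-b)^n p^(n choose 2)`, written without dividing by `b`: the numerator of the
`q`-Gauss sum in the limit where one numerator parameter tends to infinity. -/
noncomputable def qGaussLimitNum (p b : ℂ) (n : ℕ) : ℂ :=
  p ^ n.choose 2 * ∏ i ∈ range n, (p ^ (i + 1) - b)

lemma qGaussLimitNum_succ (p b : ℂ) (n : ℕ) :
    qGaussLimitNum p b (n + 1) = qGaussLimitNum p b n * (p ^ n * (p ^ (n + 1) - b)) := by
  rw [qGaussLimitNum, qGaussLimitNum, Nat.choose_succ_succ' n 1, Nat.choose_one_right, pow_add,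
    prod_range_succ]
  ring

lemma summable_qGaussLimitNum (hp : ‖p‖ < 1) (b : ℂ) : Summable (qGaussLimitNum p b) := by
  refine summable_of_ratio_norm_eventually_le (r := 1 / 2) (by norm_num) ?_
  have hsmall : ∀ᶠ n in atTop, ‖p‖ ^ n * (1 + ‖b‖) ≤ 1 / 2 := by
    refine ((tendsto_pow_atTop_nhds_zero_of_lt_one (norm_nonneg p) hp).mul_const
      (1 + ‖b‖)).eventually_le_const ?_
    norm_num
  filter_upwards [hsmall] with n hn
  have hfactor : ‖p ^ (n + 1) - b‖ ≤ 1 + ‖b‖ := by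
    refine (norm_sub_le _ _).trans ?_
    gcongr
    rw [norm_pow]
    exact pow_le_one₀ (norm_nonneg p) hp.le
  rw [qGaussLimitNum_succ, norm_mul, norm_mul, norm_pow, mul_comm (1 / 2 : ℝ)]
  gcongr
  exact (mul_le_mul_of_nonneg_left hfactor (by positivity)).trans hn

noncomputable def qGaussLimitSummand (p b : ℂ) (N k : ℕ) : ℂ :=
  qGaussLimitNum p b k / (qPoch p p k ^ 2 * qPoch p p (N - k))

/-- Wilf–Zeilberger certificate of the recurrence in `N` satisfied by `qGaussLimitSummand`. -/
noncomputable def qGaussLimitCert (p b : ℂ) (N j : ℕ) : ℂ :=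
  -(p ^ (N + 1 - j) * (1 - p ^ j) ^ 2 * qGaussLimitNum p b j
    / (qPoch p p j ^ 2 * qPoch p p (N + 1 - j)))

lemma qGaussLimitSummand_recurrence (hp : ‖p‖ < 1) (b : ℂ) {N k : ℕ} (hk : k ≤ N) :
    (1 - p ^ (N + 1)) ^ 2 * qGaussLimitSummand p b (N + 1) k
      = (1 - b * p ^ N) * qGaussLimitSummand p b N k
        + (qGaussLimitCert p b N (k + 1) - qGaussLimitCert p b N k) := by
  obtain ⟨m, rfl⟩ := Nat.exists_eq_add_of_le hk
  simp only [qGaussLimitSummand, qGaussLimitCert, show k + m + 1 - k = m + 1 by omega,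
    show k + m - k = m by omega, show k + m + 1 - (k + 1) = m by omega, qPoch_self_succ,
    qGaussLimitNum_succ]
  have := qPoch_ne_zero hp hp.le k
  have := qPoch_ne_zero hp hp.le m
  have := one_sub_pow_succ_ne_zero hp k
  have := one_sub_pow_succ_ne_zero hp m
  field_simp
  ring

theorem sum_qGaussLimitSummand (hp : ‖p‖ < 1) (b : ℂ) (N : ℕ) :
    ∑ k ∈ range (N + 1), qGaussLimitSummand p b N k = qPoch b p N / qPoch p p N ^ 2 := by
  induction N with
  | zero => simp [qGaussLimitSummand, qGaussLimitNum, qPoch_zero]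
  | succ N ih =>
    have hN := one_sub_pow_succ_ne_zero hp N
    have hQ := qPoch_ne_zero hp hp.le N
    apply mul_left_cancel₀ (pow_ne_zero 2 hN)
    rw [sum_range_succ, mul_add, mul_sum, sum_congr rfl fun k hk =>
      qGaussLimitSummand_recurrence hp b (Nat.lt_succ_iff.1 (mem_range.1 hk)), sum_add_distrib,
      ← mul_sum, ih, sum_range_sub]
    simp only [qGaussLimitSummand, qGaussLimitCert, Nat.sub_self, Nat.sub_zero, pow_zero,
      sub_self, qPoch_zero, qPoch_succ b, qPoch_self_succ]
    field_simp
    ring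

lemma tendsto_sum_qGaussLimitSummand (hp : ‖p‖ < 1) (b : ℂ) :
    Tendsto (fun N => ∑ k ∈ range (N + 1), qGaussLimitSummand p b N k) atTop
      (𝓝 (∑' k, qGaussLimitNum p b k / (qPoch p p k ^ 2 * qPochInf p p))) := by
  obtain ⟨C, hC⟩ := exists_norm_inv_qPoch_le hp hp
  have hC0 : 0 ≤ C := (norm_nonneg _).trans (hC 0)
  set F : ℕ → ℕ → ℂ := fun N => (range (N + 1) : Set ℕ).indicator (qGaussLimitSummand p b N)
  have hF : ∀ N, ∑' k, F N k = ∑ k ∈ range (N + 1), qGaussLimitSummand p b N k := fun N =>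
    (_root_.tsum_subtype _ _).symm.trans (Finset.tsum_subtype _ _)
  simp only [← hF]
  refine tendsto_tsum_of_dominated_convergence (bound := fun k => C ^ 3 * ‖qGaussLimitNum p b k‖)
    ((summable_qGaussLimitNum hp b).norm.mul_left _) (fun k => ?_) (.of_forall fun N k => ?_)
  · have hlim : Tendsto (fun N => qGaussLimitSummand p b N k) atTop
        (𝓝 (qGaussLimitNum p b k / (qPoch p p k ^ 2 * qPochInf p p))) :=
      tendsto_const_nhds.div (((tendsto_qPoch p hp).comp (tendsto_sub_atTop_nat k)).const_mul _)
        (mul_ne_zero (pow_ne_zero 2 (qPoch_ne_zero hp hp.le k)) (qPochInf_ne_zero hp hp))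
    refine hlim.congr' ?_
    filter_upwards [eventually_ge_atTop k] with N hN
    simp [F, Nat.lt_succ_iff.2 hN]
  · simp only [F, Set.indicator]
    split_ifs
    · rw [qGaussLimitSummand, div_eq_mul_inv, mul_inv, ← inv_pow, norm_mul, norm_mul, norm_pow]
      calc ‖qGaussLimitNum p b k‖ * (‖(qPoch p p k)⁻¹‖ ^ 2 * ‖(qPoch p p (N - k))⁻¹‖)
          ≤ ‖qGaussLimitNum p b k‖ * (C ^ 2 * C) := by gcongr <;> exact hC _
        _ = C ^ 3 * ‖qGaussLimitNum p b k‖ := by ring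
    · rw [norm_zero]
      positivity

theorem tsum_qGaussLimitNum_div (hp : ‖p‖ < 1) (b : ℂ) :
    ∑' n, qGaussLimitNum p b n / qPoch p p n ^ 2 = qPochInf b p / qPochInf p p := by
  have hQ := qPochInf_ne_zero hp hp
  have hlim : Tendsto (fun N => qPoch b p N / qPoch p p N ^ 2) atTop
      (𝓝 (qPochInf b p / qPochInf p p ^ 2)) :=
    (tendsto_qPoch b hp).div ((tendsto_qPoch p hp).pow 2) (pow_ne_zero 2 hQ)
  have h := tendsto_nhds_unique
    ((tendsto_sum_qGaussLimitSummand hp b).congr (sum_qGaussLimitSummand hp b)) hlim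
  simp only [← div_div, tsum_div_const] at h
  rw [div_eq_div_iff hQ (pow_ne_zero 2 hQ)] at h
  rw [eq_div_iff hQ]
  exact mul_right_cancel₀ hQ (by linear_combination h)

end QGaussLimit

lemma qGaussLimitNum_sq_neg (q : ℂ) (n : ℕ) :
    qGaussLimitNum (q ^ 2) (-q) n = q ^ (n ^ 2) * qPoch (-q) (q ^ 2) n := by
  induction n with
  | zero => simp [qGaussLimitNum, qPoch_zero]
  | succ n ih =>
    rw [qGaussLimitNum_succ, ih, qPoch_succ]
    ring

theorem stmt_0 (q : ℂ) (hq : ‖q‖ < 1) :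
    ∑' n : ℕ, q ^ (n ^ 2) * qPoch (-q) (q ^ 2) n / (qPoch (q ^ 2) (q ^ 2) n) ^ 2
      = qPochInf (-q) (q ^ 2) / qPochInf (q ^ 2) (q ^ 2) := by
  have hq2 : ‖q ^ 2‖ < 1 := by
    rw [norm_pow]
    exact pow_lt_one₀ (norm_nonneg q) hq two_ne_zero
  simp only [← qGaussLimitNum_sq_neg]
  exact tsum_qGaussLimitNum_div hq2 (-q)
end

section
/- For all complex q with |q| < 1, the sum over n ≥ 0 of (-1)^n q^{n^2+n} / (-q;q^2)_{n+1} equals the sum over j ≥ 0 of q^{3j^2+2j} (1 - q^{2j+1}). -/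
/-!
Write `F_m(x) = ∑_{k<m} (-x)^k (-q;q²)_k`. Induction on `m` gives the functional equation
`1 - (1 + x) F_m(x) - x q F_{m+1}(x q²) = (-x)^m (1 - x q^{2m+1}) (-q;q²)_m`, and at
`x = q^{2n+1}` it says that the `n`-th term on the left minus the `n`-th term on the right is
`ρ_{n+1} - ρ_n`, where `ρ_N = (-1)^{N+1} q^{N(N+1)} F_N(q^{2N+1}) / (-q;q²)_N` and `ρ_0 = 0`.
Since `|ρ_N| ≤ (|q|^N · 2|q|/(1-|q|))^N`, the difference of the partial sums tends to `0`.
-/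

open Finset Filter

section Algebra

variable {R : Type*} [CommRing R]

def oddPoch (q : R) (n : ℕ) : R := ∏ i ∈ range n, (1 + q ^ (2 * i + 1))

lemma oddPoch_zero (q : R) : oddPoch q 0 = 1 := prod_range_zero _

lemma oddPoch_succ (q : R) (n : ℕ) : oddPoch q (n + 1) = oddPoch q n * (1 + q ^ (2 * n + 1)) :=
  prod_range_succ _ _

lemma qPoch_neg_sq (q : ℂ) (n : ℕ) : qPoch (-q) (q ^ 2) n = oddPoch q n :=
  prod_congr rfl fun _ _ => by ring

def oddPochSeries (q x : R) (m : ℕ) : R := ∑ k ∈ range m, (-x) ^ k * oddPoch q k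

lemma oddPochSeries_succ (q x : R) (m : ℕ) :
    oddPochSeries q x (m + 1) = oddPochSeries q x m + (-x) ^ m * oddPoch q m :=
  sum_range_succ _ _

lemma oddPochSeries_functional_eq (q x : R) (m : ℕ) :
    1 - (1 + x) * oddPochSeries q x m - x * q * oddPochSeries q (x * q ^ 2) (m + 1)
      = (-x) ^ m * (1 - x * q ^ (2 * m + 1)) * oddPoch q m := by
  induction m with
  | zero => simp [oddPochSeries, oddPoch_zero]
  | succ m ih =>
    rw [oddPochSeries_succ q x, oddPochSeries_succ q (x * q ^ 2) (m + 1), oddPoch_succ]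
    linear_combination ih

end Algebra

section Field

variable {K : Type*} [Field K]

def rogersFineRemainder (q : K) (n : ℕ) : K :=
  (-1) ^ (n + 1) * q ^ (n * (n + 1)) * oddPochSeries q (q ^ (2 * n + 1)) n / oddPoch q n

lemma rogersFineRemainder_zero (q : K) : rogersFineRemainder q 0 = 0 := by
  simp [rogersFineRemainder, oddPochSeries]

lemma rogersFineRemainder_succ_sub (q : K) (n : ℕ) (h : oddPoch q (n + 1) ≠ 0) :
    rogersFineRemainder q (n + 1) - rogersFineRemainder q n
      = (-1) ^ n * q ^ (n ^ 2 + n) / oddPoch q (n + 1)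
        - q ^ (3 * n ^ 2 + 2 * n) * (1 - q ^ (2 * n + 1)) := by
  have hF := oddPochSeries_functional_eq q (q ^ (2 * n + 1)) n
  rw [oddPoch_succ] at h
  have hn := left_ne_zero_of_mul h
  have hx := right_ne_zero_of_mul h
  have e : q ^ (2 * (n + 1) + 1) = q ^ (2 * n + 1) * q ^ 2 := by ring
  simp only [rogersFineRemainder, e, oddPoch_succ]
  field_simp
  -- clearing denominators leaves the sign `(-1) ^ n` squared
  have hs : ((-1 : K) ^ n) ^ 2 = 1 := by rw [← pow_mul, pow_mul', neg_one_sq, one_pow]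
  linear_combination -(-1) ^ n * q ^ (n ^ 2 + n) * hF
    - q ^ (3 * n ^ 2 + 2 * n) * (1 - q ^ (4 * n + 2)) * oddPoch q n * hs

lemma sum_range_rogersFine_sub (q : K) (h : ∀ n, oddPoch q n ≠ 0) (N : ℕ) :
    ∑ n ∈ range N, ((-1) ^ n * q ^ (n ^ 2 + n) / oddPoch q (n + 1)
        - q ^ (3 * n ^ 2 + 2 * n) * (1 - q ^ (2 * n + 1)))
      = rogersFineRemainder q N := by
  rw [← sub_zero (rogersFineRemainder q N), ← rogersFineRemainder_zero q, ← sum_range_sub]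
  exact sum_congr rfl fun n _ => (rogersFineRemainder_succ_sub q n (h _)).symm

end Field

lemma summable_pow_mul_pow_self {r : ℝ} (hr₀ : 0 ≤ r) (hr₁ : r < 1) (c : ℝ) :
    Summable fun n : ℕ => (r ^ n * c) ^ n := by
  have hlim : Tendsto (fun n : ℕ => r ^ n * c) atTop (nhds 0) := by
    simpa using (tendsto_pow_atTop_nhds_zero_of_lt_one hr₀ hr₁).mul_const c
  refine .of_norm_bounded_eventually_nat summable_geometric_two ?_
  filter_upwards [(tendsto_zero_iff_norm_tendsto_zero.1 hlim).eventually_le_const one_half_pos]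
    with n hn
  rw [norm_pow]
  exact pow_le_pow_left₀ (norm_nonneg _) hn n

section Normed

variable {K : Type*} [NormedField K] {q : K}

lemma norm_oddPoch_le (hq : ‖q‖ ≤ 1) (n : ℕ) : ‖oddPoch q n‖ ≤ 2 ^ n := by
  rw [oddPoch, norm_prod]
  calc ∏ i ∈ range n, ‖1 + q ^ (2 * i + 1)‖ ≤ ∏ _i ∈ range n, (2 : ℝ) := by
        refine prod_le_prod (fun _ _ => norm_nonneg _) fun i _ => ?_
        calc ‖1 + q ^ (2 * i + 1)‖ ≤ 1 + ‖q‖ ^ (2 * i + 1) := by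
              simpa using norm_add_le (1 : K) (q ^ (2 * i + 1))
          _ ≤ 2 := by linarith [pow_le_one₀ (norm_nonneg q) hq (n := 2 * i + 1)]
    _ = 2 ^ n := by rw [prod_const, card_range]

lemma one_sub_norm_pow_le_norm_oddPoch (hq : ‖q‖ ≤ 1) (n : ℕ) :
    (1 - ‖q‖) ^ n ≤ ‖oddPoch q n‖ := by
  rw [oddPoch, norm_prod]
  calc (1 - ‖q‖) ^ n = ∏ _i ∈ range n, (1 - ‖q‖) := by rw [prod_const, card_range]
    _ ≤ ∏ i ∈ range n, ‖1 + q ^ (2 * i + 1)‖ := by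
        refine prod_le_prod (fun _ _ => sub_nonneg.2 hq) fun i _ => ?_
        calc 1 - ‖q‖ ≤ 1 - ‖q‖ ^ (2 * i + 1) := by
              gcongr; exact pow_le_of_le_one (norm_nonneg q) hq (by omega)
          _ ≤ ‖1 + q ^ (2 * i + 1)‖ := by
              simpa using norm_sub_norm_le (1 : K) (-q ^ (2 * i + 1))

lemma oddPoch_ne_zero (hq : ‖q‖ < 1) (n : ℕ) : oddPoch q n ≠ 0 :=
  norm_pos_iff.1 <| (pow_pos (sub_pos.2 hq) n).trans_le (one_sub_norm_pow_le_norm_oddPoch hq.le n)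

lemma norm_oddPochSeries_le (hq : ‖q‖ ≤ 1) {x : K} (hx : ‖x‖ ≤ 1) (m : ℕ) :
    ‖oddPochSeries q x m‖ ≤ 2 ^ m :=
  calc ‖oddPochSeries q x m‖ ≤ ∑ k ∈ range m, ‖(-x) ^ k * oddPoch q k‖ := norm_sum_le _ _
    _ ≤ ∑ k ∈ range m, (2 : ℝ) ^ k := by
        refine sum_le_sum fun k _ => ?_
        rw [norm_mul, norm_pow, norm_neg]
        exact (mul_le_of_le_one_left (norm_nonneg _) (pow_le_one₀ (norm_nonneg x) hx)).trans
          (norm_oddPoch_le hq k)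
    _ ≤ 2 ^ m := by
        rw [geom_sum_eq (by norm_num : (2 : ℝ) ≠ 1)]
        norm_num

lemma norm_rogersFineRemainder_le (hq : ‖q‖ < 1) (n : ℕ) :
    ‖rogersFineRemainder q n‖ ≤ (‖q‖ ^ n * (2 * ‖q‖ / (1 - ‖q‖))) ^ n := by
  have hx : ‖q ^ (2 * n + 1)‖ ≤ 1 := by
    rw [norm_pow]; exact pow_le_one₀ (norm_nonneg q) hq.le
  rw [rogersFineRemainder, norm_div, norm_mul, norm_mul, norm_pow, norm_pow, norm_neg, norm_one,
    one_pow, one_mul]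
  calc ‖q‖ ^ (n * (n + 1)) * ‖oddPochSeries q (q ^ (2 * n + 1)) n‖ / ‖oddPoch q n‖
      ≤ ‖q‖ ^ (n * (n + 1)) * 2 ^ n / (1 - ‖q‖) ^ n := by
        gcongr
        · exact norm_oddPochSeries_le hq.le hx n
        · exact one_sub_norm_pow_le_norm_oddPoch hq.le n
    _ = (‖q‖ ^ n * (2 * ‖q‖ / (1 - ‖q‖))) ^ n := by ring

lemma tendsto_rogersFineRemainder (hq : ‖q‖ < 1) :
    Tendsto (rogersFineRemainder q) atTop (nhds 0) :=
  squeeze_zero_norm (norm_rogersFineRemainder_le hq)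
    (summable_pow_mul_pow_self (norm_nonneg q) hq _).tendsto_atTop_zero

variable [CompleteSpace K]

lemma summable_rogersFine_lhs (hq : ‖q‖ < 1) :
    Summable fun n : ℕ => (-1) ^ n * q ^ (n ^ 2 + n) / oddPoch q (n + 1) := by
  have h1 : 0 < 1 - ‖q‖ := sub_pos.2 hq
  have h1ne := h1.ne'
  refine .of_norm_bounded
    ((summable_pow_mul_pow_self (norm_nonneg q) hq (‖q‖ / (1 - ‖q‖))).div_const (1 - ‖q‖))
    fun n => ?_
  rw [norm_div, norm_mul, norm_pow, norm_pow, norm_neg, norm_one, one_pow, one_mul]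
  calc ‖q‖ ^ (n ^ 2 + n) / ‖oddPoch q (n + 1)‖ ≤ ‖q‖ ^ (n ^ 2 + n) / (1 - ‖q‖) ^ (n + 1) :=
        div_le_div_of_nonneg_left (by positivity) (pow_pos h1 _)
          (one_sub_norm_pow_le_norm_oddPoch hq.le _)
    _ = (‖q‖ ^ n * (‖q‖ / (1 - ‖q‖))) ^ n / (1 - ‖q‖) := by
        rw [mul_pow, div_pow, pow_succ]; field_simp; ring

lemma summable_rogersFine_rhs (hq : ‖q‖ < 1) :
    Summable fun j : ℕ => q ^ (3 * j ^ 2 + 2 * j) * (1 - q ^ (2 * j + 1)) := by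
  refine .of_norm_bounded ((summable_geometric_of_lt_one (norm_nonneg q) hq).mul_left 2)
    fun j => ?_
  rw [norm_mul, norm_pow]
  refine (mul_le_mul (pow_le_pow_of_le_one (norm_nonneg q) hq.le (by nlinarith)) ?_
    (norm_nonneg _) (by positivity)).trans_eq (mul_comm _ _)
  calc ‖1 - q ^ (2 * j + 1)‖ ≤ 1 + ‖q‖ ^ (2 * j + 1) := by
        simpa using norm_sub_le (1 : K) (q ^ (2 * j + 1))
    _ ≤ 2 := by linarith [pow_le_one₀ (norm_nonneg q) hq.le (n := 2 * j + 1)]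

end Normed

theorem stmt_2 (q : ℂ) (hq : ‖q‖ < 1) :
    ∑' n : ℕ, (-1) ^ n * q ^ (n ^ 2 + n) / qPoch (-q) (q ^ 2) (n + 1)
      = ∑' j : ℕ, q ^ (3 * j ^ 2 + 2 * j) * (1 - q ^ (2 * j + 1)) := by
  simp_rw [qPoch_neg_sq]
  rw [← sub_eq_zero]
  refine tendsto_nhds_unique
    ((summable_rogersFine_lhs hq).hasSum.sub (summable_rogersFine_rhs hq).hasSum).tendsto_sum_nat ?_
  simpa only [sum_range_rogersFine_sub q (oddPoch_ne_zero hq)] using tendsto_rogersFineRemainder hq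
end

section
/- For every nonnegative integer n and commuting variables a, b, the product (a(1-b)q;q)_n / (aq;q)_n equals the sum over all partitions π whose largest part is at most n of a^{ν(π)} b^{ν_d(π)} q^{|π|}, where ν(π) is the number of parts of π, ν_d(π) is the number of distinct part sizes of π, and |π| is the sum of the parts, as an identity of formal power series in q (with coefficients polynomial in a, b). -/
/-!
Group the partitions by their part sizes. A part size `k ≤ n` occurring with multiplicity
`c ≥ 1` contributes `b aᶜ q^{kc}`, so the generating function is the product over `k ≤ n` of
`1 + b ∑_{c ≥ 1} (a qᵏ)ᶜ = (1 - a(1 - b) qᵏ) / (1 - a qᵏ)`.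
In Mathlib's terms this is `Nat.Partition.genFun` with weight `f k c = b * a ^ c` for `k ≤ n`
and `0` otherwise.
-/

open scoped Classical

noncomputable abbrev K12 := FractionRing (MvPolynomial (Fin 2) ℚ)

namespace Nat.Partition

open PowerSeries PowerSeries.WithPiTopology Finset

variable {R : Type*} [CommRing R]

theorem prod_toFinsupp_parts_ite_le {m : ℕ} (p : m.Partition) (n : ℕ) (a b : R) :
    p.parts.toFinsupp.prod (fun i c ↦ if i ≤ n then b * a ^ c else 0) =
      if ∀ i ∈ p.parts, i ≤ n then a ^ p.parts.card * b ^ p.parts.toFinset.card else 0 := by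
  simp only [Finsupp.prod, Multiset.toFinsupp_support, Multiset.toFinsupp_apply, prod_ite_zero,
    Multiset.mem_toFinset, prod_mul_distrib, prod_const, prod_pow_eq_pow_sum,
    Multiset.toFinset_sum_count_eq]
  rw [mul_comm]

theorem genFun_ite_le (n : ℕ) (a b : R) :
    genFun (fun i c ↦ if i ≤ n then b * a ^ c else 0) =
      PowerSeries.mk fun m ↦ ∑ p ∈ univ.filter (fun p : m.Partition ↦ ∀ i ∈ p.parts, i ≤ n),
        a ^ p.parts.card * b ^ p.parts.toFinset.card := by
  ext m
  simp only [coeff_genFun, prod_toFinsupp_parts_ite_le, coeff_mk, sum_filter]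

section Topological

variable [TopologicalSpace R] [T2Space R]

theorem genFun_eq_prod_range {f : ℕ → ℕ → R} {n : ℕ} (hf : ∀ i, n < i → ∀ c, f i c = 0) :
    genFun f = ∏ i ∈ range n, (1 + ∑' j, f (i + 1) (j + 1) • X ^ ((i + 1) * (j + 1))) := by
  rw [genFun_eq_tprod]
  refine tprod_eq_prod fun i hi ↦ ?_
  simp [hf (i + 1) (by simpa using hi)]

theorem one_add_tsum_mul_one_sub [IsTopologicalRing R] {k : ℕ} (hk : k ≠ 0) (a b : R) :
    (1 + ∑' j, (b * a ^ (j + 1)) • (X : R⟦X⟧) ^ (k * (j + 1))) * (1 - C a * X ^ k) =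
      1 - C (a * (1 - b)) * X ^ k := by
  set y : R⟦X⟧ := C a * X ^ k
  have hy : constantCoeff y = 0 := by simp [y, hk]
  have hterm : ∀ j, (b * a ^ (j + 1)) • (X : R⟦X⟧) ^ (k * (j + 1)) = C b * y * y ^ j := by
    intro j
    simp only [smul_eq_C_mul, y, map_mul, map_pow, pow_mul]
    ring
  simp_rw [hterm]
  rw [(summable_pow_of_constantCoeff_eq_zero hy).tsum_mul_left, add_mul, mul_assoc,
    tsum_pow_mul_one_sub_of_constantCoeff_eq_zero hy]
  simp only [y, map_mul, map_sub, map_one]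
  ring

end Topological

theorem genFun_ite_le_mul_prod (n : ℕ) (a b : R) :
    genFun (fun i c ↦ if i ≤ n then b * a ^ c else 0) *
        ∏ i ∈ range n, (1 - C a * X ^ (i + 1)) =
      ∏ i ∈ range n, (1 - C (a * (1 - b)) * X ^ (i + 1)) := by
  -- the statement is topology-free; the discrete topology only serves to use `genFun_eq_tprod`
  let _ : TopologicalSpace R := ⊥
  have _ : DiscreteTopology R := ⟨rfl⟩
  rw [genFun_eq_prod_range (n := n) fun i hi c ↦ if_neg hi.not_ge, ← prod_mul_distrib]
  refine prod_congr rfl fun i hi ↦ ?_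
  have hle : i + 1 ≤ n := mem_range.1 hi
  simp only [hle, if_true]
  exact one_add_tsum_mul_one_sub i.succ_ne_zero a b

end Nat.Partition

theorem stmt_12 (n : ℕ) :
    (∏ i ∈ Finset.range n,
        (1 - PowerSeries.C (R := K12)
            ((algebraMap (MvPolynomial (Fin 2) ℚ) K12 (MvPolynomial.X 0)) *
              (1 - algebraMap (MvPolynomial (Fin 2) ℚ) K12 (MvPolynomial.X 1)))
          * PowerSeries.X ^ (i + 1))) *
      (∏ i ∈ Finset.range n,
        (1 - PowerSeries.C (R := K12)
            (algebraMap (MvPolynomial (Fin 2) ℚ) K12 (MvPolynomial.X 0))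
          * PowerSeries.X ^ (i + 1)))⁻¹
    = PowerSeries.mk (fun m =>
        ∑ π ∈ Finset.univ.filter (fun π : Nat.Partition m => ∀ p ∈ π.parts, p ≤ n),
          (algebraMap (MvPolynomial (Fin 2) ℚ) K12 (MvPolynomial.X 0)) ^ (Multiset.card π.parts)
            * (algebraMap (MvPolynomial (Fin 2) ℚ) K12 (MvPolynomial.X 1)) ^ π.parts.toFinset.card) := by
  rw [← Nat.Partition.genFun_ite_le, eq_comm, PowerSeries.eq_mul_inv_iff_mul_eq (by simp)]
  exact Nat.Partition.genFun_ite_le_mul_prod n _ _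
end

section
/- As formal power series in q, the sum over partitions π = (λ_1 ≥ λ_2 ≥ ... ≥ λ_ν) with difference between consecutive parts at least 2, of the weight ω(π) = λ_ν · ∏_{i=1}^{ν-1}(λ_i - λ_{i+1} - 1) times q^{|π|}, equals the sum over all partitions π of q^{|π|}, i.e., equals ∏_{k≥1} 1/(1-q^k); the weight of the empty partition is 1. -/
open scoped Classical

/-- Alladi's weight `ω(π) = λ_ν ⬝ ∏ (λ_i - λ_{i+1} - 1)` on the list of parts
written in non-increasing order. -/
def alladiWeight : List ℕ → ℕ
  | [] => 1
  | [x] => x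
  | x :: y :: t => (x - y - 1) * alladiWeight (y :: t)

/-!
Both sides count Frobenius symbols `(a₁ > ⋯ > a_d | b₁ > ⋯ > b_d)` with `aᵢ, bᵢ ≥ 0`.
Removing the principal hook shows that the partitions of `m` fitting in an `A × B` box and the
Frobenius symbols of size `∑ (aᵢ + bᵢ + 1) = m` with arms `< A` and legs `< B` satisfy the same
recursion, so they are equinumerous. The diagonal hook lengths `hᵢ = aᵢ + bᵢ + 1` of a symbol
decrease by at least 2, i.e. they form a Rogers–Ramanujan partition of `m`. Conversely, a given
RR partition `h₁ > ⋯ > h_ν` arises from exactly `h_ν ∏ (hᵢ - hᵢ₊₁ - 1)` symbols: `a_ν` is any of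
`0, …, h_ν - 1`, and then `aᵢ` ranges over the `hᵢ - hᵢ₊₁ - 1` values strictly between `aᵢ₊₁` and
`hᵢ - 1 - bᵢ₊₁`.
-/

open Finset

theorem Finset.sum_powerset_range {M : Type*} [AddCommMonoid M] (g : Finset ℕ → M) (A : ℕ) :
    ∑ s ∈ (range A).powerset, g s =
      g ∅ + ∑ x ∈ range A, ∑ s ∈ (range x).powerset, g (insert x s) := by
  induction A with
  | zero => simp
  | succ A ih =>
    rw [range_add_one, sum_powerset_insert notMem_range_self, ih, sum_insert notMem_range_self,
      add_assoc, add_comm (∑ s ∈ (range A).powerset, g (insert A s))]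

theorem Finset.sum_range_sum_range_ite_add_add_one_eq {M : Type*} [AddCommMonoid M]
    (g : ℕ → ℕ → M) (A B h : ℕ) :
    ∑ x ∈ range A, ∑ y ∈ range B, (if x + y + 1 = h then g x y else 0) =
      ∑ x ∈ range h, if x < A ∧ h - 1 - x < B then g x (h - 1 - x) else 0 := by
  have inner (x : ℕ) : ∑ y ∈ range B, (if x + y + 1 = h then g x y else 0) =
      if x < h ∧ h - 1 - x < B then g x (h - 1 - x) else 0 := by
    by_cases hx : x < h
    · have : ∀ y, x + y + 1 = h ↔ h - 1 - x = y := fun y => by omega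
      simp only [this, sum_ite_eq, mem_range, hx, true_and]
    · rw [if_neg (by omega)]
      exact sum_eq_zero fun y _ => if_neg (by omega)
  simp only [inner, ← sum_filter]
  exact sum_congr (by ext; simp only [mem_filter, mem_range]; omega) fun _ _ => rfl

theorem Multiset.sup_mem_of_ne_zero {α : Type*} [LinearOrder α] [OrderBot α] {s : Multiset α}
    (hs : s ≠ 0) : s.sup ∈ s := by
  obtain ⟨a, ha, hmax⟩ := s.exists_max_image id hs
  rwa [le_antisymm (Multiset.sup_le.2 hmax) (Multiset.le_sup ha)]

theorem List.isChain_zipWith_add_add_one :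
    ∀ {a b : List ℕ}, a.IsChain (· > ·) → b.IsChain (· > ·) →
      (List.zipWith (fun u v => u + v + 1) a b).IsChain (fun u v => v + 2 ≤ u)
  | x :: x' :: a, y :: y' :: b, ha, hb => by
    rw [List.isChain_cons_cons] at ha hb
    simp only [List.zipWith_cons_cons, List.isChain_cons_cons]
    exact ⟨by omega, by simpa using List.isChain_zipWith_add_add_one ha.2 hb.2⟩
  | [], _, _, _ | _ :: _, [], _, _ | [_], _ :: _, _, _ | _ :: _ :: _, [_], _, _ => by simp

theorem List.pos_of_mem_zipWith_add_add_one :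
    ∀ {a b : List ℕ}, ∀ h ∈ List.zipWith (fun u v => u + v + 1) a b, 0 < h
  | x :: a, y :: b, h, hh => by
    rw [List.zipWith_cons_cons, List.mem_cons] at hh
    exact hh.elim (fun hh => hh ▸ Nat.succ_pos _) (List.pos_of_mem_zipWith_add_add_one h)
  | [], _, _, h | _ :: _, [], _, h => by simp at h

namespace Frobenius

/-- The symbol `(a₁ > ⋯ > a_d | b₁ > ⋯ > b_d)` is stored as the pair of sets `({aᵢ}, {bᵢ})`; it
encodes the partition whose `i`-th diagonal hook has arm `aᵢ` and leg `bᵢ`. -/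
def symbols (A B : ℕ) : Finset (Finset ℕ × Finset ℕ) :=
  ((range A).powerset ×ˢ (range B).powerset).filter fun p => #p.1 = #p.2

theorem sum_symbols {M : Type*} [AddCommMonoid M] (f : Finset ℕ × Finset ℕ → M) (A B : ℕ) :
    ∑ p ∈ symbols A B, f p = f (∅, ∅) +
      ∑ x ∈ range A, ∑ y ∈ range B, ∑ p ∈ symbols x y, f (insert x p.1, insert y p.2) := by
  have card_insert {x : ℕ} {s : Finset ℕ} (hs : s ∈ (range x).powerset) :
      #(insert x s) = #s + 1 :=
    card_insert_of_notMem fun hx => by simpa using mem_powerset.1 hs hx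
  have row (s : Finset ℕ) (g : Finset ℕ → M) (hg : ∀ y, ∀ t ∈ (range y).powerset,
      (if #s = #(insert y t) then g (insert y t) else 0) =
        if #s = #t + 1 then g (insert y t) else 0) :
      ∑ t ∈ (range B).powerset, (if #s = #t then g t else 0) =
        (if #s = 0 then g ∅ else 0) + ∑ y ∈ range B, ∑ t ∈ (range y).powerset,
          if #s = #t + 1 then g (insert y t) else 0 := by
    rw [sum_powerset_range, card_empty]
    congr 1
    exact sum_congr rfl fun y _ => sum_congr rfl fun t ht => hg y t ht
  simp only [symbols, sum_filter, sum_product]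
  rw [sum_powerset_range, row ∅ _ (fun y t ht => by rw [card_insert ht])]
  simp only [card_empty, if_true, Nat.zero_ne_add_one, if_false, sum_const_zero, add_zero]
  congr 1
  refine sum_congr rfl fun x _ => ?_
  conv_rhs => rw [sum_comm]
  refine sum_congr rfl fun s hs => ?_
  rw [row _ _ (fun y t ht => by rw [card_insert ht]), card_insert hs]
  simp only [Nat.add_one_ne_zero, if_false, zero_add, Nat.add_right_cancel_iff]

def hookLengths (p : Finset ℕ × Finset ℕ) : List ℕ :=
  List.zipWith (fun a b => a + b + 1) (p.1.sort (· ≥ ·)) (p.2.sort (· ≥ ·))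

theorem hookLengths_insert {x y : ℕ} {p : Finset ℕ × Finset ℕ} (hp : p ∈ symbols x y) :
    hookLengths (insert x p.1, insert y p.2) = (x + y + 1) :: hookLengths p := by
  simp only [symbols, mem_filter, mem_product, mem_powerset] at hp
  obtain ⟨⟨hx, hy⟩, -⟩ := hp
  have ge_of_mem {z : ℕ} {s : Finset ℕ} (hs : s ⊆ range z) (b : ℕ) (hb : b ∈ s) : z ≥ b :=
    (mem_range.1 (hs hb)).le
  rw [hookLengths, sort_insert _ (ge_of_mem hx) fun h => by simpa using hx h,
    sort_insert _ (ge_of_mem hy) fun h => by simpa using hy h]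
  rfl

theorem card_hookLengths_eq_nil (A B : ℕ) : #{p ∈ symbols A B | hookLengths p = []} = 1 := by
  rw [card_filter, sum_symbols]
  refine (add_eq_left.2 <| sum_eq_zero fun x _ => sum_eq_zero fun y _ =>
    sum_eq_zero fun p hp => ?_).trans (if_pos (by simp [hookLengths]))
  simp [hookLengths_insert hp]

theorem isChain_hookLengths (p : Finset ℕ × Finset ℕ) :
    (hookLengths p).IsChain (fun a b => b + 2 ≤ a) :=
  List.isChain_zipWith_add_add_one (sortedGT_sort p.1).pairwise.isChain
    (sortedGT_sort p.2).pairwise.isChain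

theorem sort_hookLengths (p : Finset ℕ × Finset ℕ) :
    (hookLengths p : Multiset ℕ).sort (· ≥ ·) = hookLengths p := by
  rw [Multiset.coe_sort]
  refine List.mergeSort_eq_self (· ≥ ·) (List.isChain_iff_pairwise.1 ?_)
  exact (isChain_hookLengths p).imp fun h => by omega

theorem card_hookLengths_eq_cons (h : ℕ) (t : List ℕ) (A B : ℕ) :
    #{p ∈ symbols A B | hookLengths p = h :: t} =
      ∑ x ∈ range h, if x < A ∧ h - 1 - x < B then
        #{p ∈ symbols x (h - 1 - x) | hookLengths p = t} else 0 := by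
  rw [card_filter, sum_symbols,
    ← sum_range_sum_range_ite_add_add_one_eq fun x y => #{p ∈ symbols x y | hookLengths p = t}]
  have : hookLengths (∅, ∅) ≠ h :: t := by simp [hookLengths]
  rw [if_neg this, zero_add]
  refine sum_congr rfl fun x _ => sum_congr rfl fun y _ => ?_
  simp only [card_filter]
  split_ifs with hxy
  · exact sum_congr rfl fun p hp => by simp [hookLengths_insert hp, hxy]
  · exact sum_eq_zero fun p hp => by simp [hookLengths_insert hp, hxy]

theorem sum_card_hookLengths_eq_alladiWeight :
    ∀ (t : List ℕ) (h : ℕ), (h :: t).IsChain (fun a b => b + 2 ≤ a) →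
      ∑ x ∈ range h, #{p ∈ symbols x (h - 1 - x) | hookLengths p = t} = alladiWeight (h :: t)
  | [], h, _ => by simp [card_hookLengths_eq_nil, alladiWeight]
  | h' :: t, h, hchain => by
    rw [List.isChain_cons_cons] at hchain
    have count (x' : ℕ) (hx' : x' < h') :
        #{x ∈ range h | x' < x ∧ h' - 1 - x' < h - 1 - x} = h - h' - 1 := by
      rw [show {x ∈ range h | x' < x ∧ h' - 1 - x' < h - 1 - x} = Ioo x' (x' + (h - h')) by
        ext; simp only [mem_filter, mem_range, mem_Ioo]; omega, Nat.card_Ioo]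
      omega
    simp only [card_hookLengths_eq_cons]
    rw [sum_comm, alladiWeight, ← sum_card_hookLengths_eq_alladiWeight t h' hchain.2, mul_sum]
    refine sum_congr rfl fun x' hx' => ?_
    rw [← sum_filter, sum_const, count x' (mem_range.1 hx'), smul_eq_mul]

theorem card_hookLengths_eq_alladiWeight {l : List ℕ} {A B : ℕ}
    (hl : l.IsChain (fun a b => b + 2 ≤ a)) (hA : ∀ a ∈ l, a ≤ A) (hB : ∀ a ∈ l, a ≤ B) :
    #{p ∈ symbols A B | hookLengths p = l} = alladiWeight l := by
  cases l with
  | nil => exact card_hookLengths_eq_nil A B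
  | cons h t =>
    rw [card_hookLengths_eq_cons, ← sum_card_hookLengths_eq_alladiWeight t h hl]
    have := hA h List.mem_cons_self
    have := hB h List.mem_cons_self
    exact sum_congr rfl fun x hx => if_pos (by simp only [mem_range] at hx; omega)

theorem card_sum_hookLengths_eq (m A B : ℕ) :
    #{p ∈ symbols A B | (hookLengths p).sum = m} = (if m = 0 then 1 else 0) +
      ∑ x ∈ range A, ∑ y ∈ range B, if x + y + 1 ≤ m then
        #{p ∈ symbols x y | (hookLengths p).sum = m - (x + y + 1)} else 0 := by
  have : hookLengths (∅, ∅) = [] := by simp [hookLengths]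
  rw [card_filter, sum_symbols, this, List.sum_nil]
  congr 1
  · exact if_congr eq_comm rfl rfl
  refine sum_congr rfl fun x _ => sum_congr rfl fun y _ => ?_
  rw [card_filter]
  split_ifs with hxy
  · exact sum_congr rfl fun p hp => by
      rw [hookLengths_insert hp, List.sum_cons]
      congr 1; exact propext (by omega)
  · exact sum_eq_zero fun p hp => by
      rw [hookLengths_insert hp, List.sum_cons, if_neg (by omega)]

end Frobenius

namespace Multiset

/-- Wraps a principal hook with arm `x` and leg `y` around `σ`: pad `σ` with zeros to `y` parts,
add one to every part, and put a new first part `x + 1`. -/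
def addHook (x y : ℕ) (σ : Multiset ℕ) : Multiset ℕ :=
  (x + 1) ::ₘ (σ + replicate (y - card σ) 0).map (· + 1)

def removeHook (x : ℕ) (s : Multiset ℕ) : Multiset ℕ :=
  ((s.erase (x + 1)).map (· - 1)).filter (· ≠ 0)

variable {x y : ℕ} {σ s : Multiset ℕ}

theorem card_addHook : card (σ.addHook x y) = max y (card σ) + 1 := by
  simp only [addHook, card_cons, card_map, card_add, card_replicate]
  omega

theorem sum_addHook : (σ.addHook x y).sum = x + 1 + σ.sum + max y (card σ) := by
  simp only [addHook, sum_cons, sum_map_add, map_id', map_const', sum_add, sum_replicate,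
    card_add, card_replicate, smul_eq_mul, mul_zero, mul_one, add_zero]
  omega

theorem self_mem_addHook : x + 1 ∈ σ.addHook x y := mem_cons_self _ _

theorem pos_of_mem_addHook {a : ℕ} (ha : a ∈ σ.addHook x y) : 0 < a := by
  simp only [addHook, mem_cons, mem_map] at ha
  omega

theorem forall_mem_addHook_le_iff :
    (∀ a ∈ σ.addHook x y, a ≤ x + 1) ↔ ∀ a ∈ σ, a ≤ x := by
  simp only [addHook, forall_mem_cons, forall_mem_map_iff, mem_add, mem_replicate]
  constructor
  · exact fun h a ha => by have := h.2 a (.inl ha); omega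
  · rintro h
    refine ⟨le_rfl, fun a ha => ?_⟩
    rcases ha with ha | ⟨-, rfl⟩
    · have := h a ha; omega
    · omega

theorem removeHook_addHook (hσ : ∀ a ∈ σ, 0 < a) : (σ.addHook x y).removeHook x = σ := by
  simp only [removeHook, addHook, erase_cons_head, map_map, Function.comp_def,
    Nat.add_sub_cancel, map_id', filter_add]
  rw [filter_eq_self.2 fun a ha => (hσ a ha).ne', filter_eq_nil.2 fun a ha => by
    simp [eq_of_mem_replicate ha], add_zero]

theorem addHook_removeHook (hs : ∀ a ∈ s, 0 < a) (hx : x + 1 ∈ s) (hy : card s = y + 1) :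
    (s.removeHook x).addHook x y = s := by
  set τ := (s.erase (x + 1)).map (· - 1)
  have hτ : card τ = y := by simp [τ, card_erase_of_mem hx, hy]
  have zeros : τ.filter (fun a => ¬a ≠ 0) = replicate (count 0 τ) 0 := by
    simpa only [not_not] using filter_eq' τ 0
  have pad : τ.filter (· ≠ 0) + replicate (y - card (τ.filter (· ≠ 0))) 0 = τ := by
    have : card (τ.filter (· ≠ 0)) + count 0 τ = y := by
      rw [← hτ, ← card_replicate (count 0 τ) 0, ← zeros, ← card_add, filter_add_not]
    rw [show y - card (τ.filter (· ≠ 0)) = count 0 τ by omega, ← zeros, filter_add_not]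
  rw [addHook, removeHook, pad, map_map, map_congr rfl fun a ha => by
    simpa using Nat.sub_add_cancel (hs a (mem_of_mem_erase ha)), map_id', cons_erase hx]

theorem pos_of_mem_removeHook {a : ℕ} (ha : a ∈ s.removeHook x) : 0 < a :=
  Nat.pos_of_ne_zero (mem_filter.1 ha).2

end Multiset

def boxPartitions (m A B : ℕ) : Finset (Multiset ℕ) :=
  (univ.image (Nat.Partition.parts (n := m))).filter fun s => (∀ a ∈ s, a ≤ A) ∧ s.card ≤ B

theorem mem_boxPartitions {m A B : ℕ} {s : Multiset ℕ} :
    s ∈ boxPartitions m A B ↔ (∀ a ∈ s, 0 < a) ∧ s.sum = m ∧ (∀ a ∈ s, a ≤ A) ∧ s.card ≤ B := by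
  simp only [boxPartitions, Finset.mem_filter, mem_image, Finset.mem_univ, true_and]
  constructor
  · rintro ⟨⟨π, rfl⟩, h⟩
    exact ⟨fun _ => π.parts_pos, π.parts_sum, h⟩
  · rintro ⟨hpos, hsum, h⟩
    exact ⟨⟨⟨s, hpos _, hsum⟩, rfl⟩, h⟩

theorem card_boxPartitions_self (m : ℕ) :
    #(boxPartitions m m m) = Fintype.card (Nat.Partition m) := by
  rw [boxPartitions, filter_true_of_mem, card_image_of_injective _ fun _ _ => Nat.Partition.ext,
    card_univ]
  intro s hs
  obtain ⟨π, -, rfl⟩ := mem_image.1 hs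
  refine ⟨fun a ha => π.le_of_mem_parts ha, ?_⟩
  simpa [π.parts_sum] using Multiset.card_nsmul_le_sum (a := 1) fun a ha => π.parts_pos ha

theorem mem_boxPartitions_filter_sup_card {m A B x y : ℕ} (hx : x < A) (hy : y < B)
    {s : Multiset ℕ} :
    s ∈ {s ∈ boxPartitions m A B | s.sup = x + 1 ∧ s.card = y + 1} ↔
      x + y + 1 ≤ m ∧ s.removeHook x ∈ boxPartitions (m - (x + y + 1)) x y ∧
        (s.removeHook x).addHook x y = s := by
  rw [Finset.mem_filter, mem_boxPartitions]
  constructor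
  · rintro ⟨⟨hpos, hsum, -, -⟩, hsup, hcard⟩
    have hmem : x + 1 ∈ s := hsup ▸ Multiset.sup_mem_of_ne_zero (Multiset.card_pos.1 (by omega))
    have hs := Multiset.addHook_removeHook hpos hmem hcard
    have hle : ∀ a ∈ s, a ≤ x + 1 := fun a ha => hsup ▸ Multiset.le_sup ha
    rw [← hs] at hle
    rw [← hs, Multiset.card_addHook] at hcard
    rw [← hs, Multiset.sum_addHook] at hsum
    exact ⟨by omega, mem_boxPartitions.2 ⟨fun _ => Multiset.pos_of_mem_removeHook, by omega,
      Multiset.forall_mem_addHook_le_iff.1 hle, by omega⟩, hs⟩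
  · rintro ⟨hm, hσ, hs⟩
    rw [← hs]
    obtain ⟨-, hsum, hle, hcard⟩ := mem_boxPartitions.1 hσ
    have hle' := Multiset.forall_mem_addHook_le_iff (y := y).2 hle
    refine ⟨⟨fun _ => Multiset.pos_of_mem_addHook, ?_, fun a ha => (hle' a ha).trans hx, ?_⟩,
      le_antisymm (Multiset.sup_le.2 hle') (Multiset.le_sup Multiset.self_mem_addHook), ?_⟩ <;>
    simp only [Multiset.sum_addHook, Multiset.card_addHook] <;> omega

theorem card_boxPartitions_filter_sup_card {m A B x y : ℕ} (hx : x < A) (hy : y < B) :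
    #{s ∈ boxPartitions m A B | s.sup = x + 1 ∧ s.card = y + 1} =
      if x + y + 1 ≤ m then #(boxPartitions (m - (x + y + 1)) x y) else 0 := by
  split_ifs with hm
  · refine card_nbij' (Multiset.removeHook x) (Multiset.addHook x y)
      (fun s hs => ((mem_boxPartitions_filter_sup_card hx hy).1 hs).2.1) (fun σ hσ => ?_)
      (fun s hs => ((mem_boxPartitions_filter_sup_card hx hy).1 hs).2.2) (fun σ hσ => ?_)
    · have hσ' := Multiset.removeHook_addHook (x := x) (y := y) (mem_boxPartitions.1 hσ).1
      refine (mem_boxPartitions_filter_sup_card hx hy).2 ⟨hm, ?_, ?_⟩ <;> rw [hσ']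
      exact hσ
    · exact Multiset.removeHook_addHook (mem_boxPartitions.1 hσ).1
  · exact card_eq_zero.2 (filter_eq_empty_iff.2 fun s hs hfib =>
      hm ((mem_boxPartitions_filter_sup_card hx hy).1 (Finset.mem_filter.2 ⟨hs, hfib⟩)).1)

theorem card_boxPartitions_eq (m A B : ℕ) :
    #(boxPartitions m A B) = (if m = 0 then 1 else 0) +
      ∑ x ∈ range A, ∑ y ∈ range B, if x + y + 1 ≤ m then
        #(boxPartitions (m - (x + y + 1)) x y) else 0 := by
  rcases Nat.eq_zero_or_pos m with rfl | hm
  · have : boxPartitions 0 A B = {0} := by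
      ext s
      simp only [mem_boxPartitions, Finset.mem_singleton]
      constructor
      · rintro ⟨hpos, hsum, -⟩
        exact Multiset.eq_zero_of_forall_notMem fun a ha =>
          (hpos a ha).ne' (Multiset.sum_eq_zero_iff.1 hsum a ha)
      · rintro rfl
        simp
    simp [this]
  have nonempty {s : Multiset ℕ} (hs : s ∈ boxPartitions m A B) : 0 < s.sup ∧ 0 < s.card := by
    obtain ⟨hpos, hsum, -⟩ := mem_boxPartitions.1 hs
    have : s ≠ 0 := by rintro rfl; simp at hsum; omega
    exact ⟨hpos _ (Multiset.sup_mem_of_ne_zero this), Multiset.card_pos.2 this⟩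
  rw [card_eq_sum_card_fiberwise (f := fun s : Multiset ℕ => (s.sup - 1, s.card - 1))
    (t := range A ×ˢ range B), sum_product, if_neg hm.ne', zero_add]
  · refine sum_congr rfl fun x hx => sum_congr rfl fun y hy => ?_
    rw [← card_boxPartitions_filter_sup_card (mem_range.1 hx) (mem_range.1 hy)]
    congr 1
    refine filter_congr fun s hs => ?_
    have := nonempty hs
    simp only [Prod.mk.injEq]
    omega
  · intro s hs
    obtain ⟨-, -, hle, hcard⟩ := mem_boxPartitions.1 hs
    have := nonempty hs
    have := hle _ (Multiset.sup_mem_of_ne_zero (Multiset.card_pos.1 this.2))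
    simp only [coe_product, coe_range, Set.mem_prod, Set.mem_Iio]
    omega

open Frobenius in
theorem card_boxPartitions_eq_card_symbols (m A B : ℕ) :
    #(boxPartitions m A B) = #{p ∈ symbols A B | (hookLengths p).sum = m} := by
  induction m using Nat.strong_induction_on generalizing A B with
  | _ m ih =>
    rw [card_boxPartitions_eq, card_sum_hookLengths_eq]
    refine congrArg _ (sum_congr rfl fun x _ => sum_congr rfl fun y _ => ?_)
    split_ifs with h
    · exact ih _ (by omega) x y
    · rfl

open Frobenius in
theorem sum_alladiWeight_eq_card (m : ℕ) :
    ∑ π ∈ univ.filter (fun π : Nat.Partition m =>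
        (π.parts.sort (· ≥ ·)).IsChain (fun a b => b + 2 ≤ a)),
      alladiWeight (π.parts.sort (· ≥ ·)) = Fintype.card (Nat.Partition m) := by
  set RR := univ.filter (fun π : Nat.Partition m =>
    (π.parts.sort (· ≥ ·)).IsChain (fun a b => b + 2 ≤ a))
  have sort_injOn : Set.InjOn (fun π : Nat.Partition m => π.parts.sort (· ≥ ·)) RR :=
    fun π₁ _ π₂ _ h => Nat.Partition.ext <| by
      rw [← Multiset.sort_eq π₁.parts (· ≥ ·), ← Multiset.sort_eq π₂.parts (· ≥ ·)]
      exact congrArg _ h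
  have hooks_mem {p : Finset ℕ × Finset ℕ}
      (hp : p ∈ {p ∈ symbols m m | (hookLengths p).sum = m}) :
      hookLengths p ∈ RR.image fun π => π.parts.sort (· ≥ ·) := by
    refine mem_image.2 ⟨⟨hookLengths p, fun ha => List.pos_of_mem_zipWith_add_add_one _ ha,
      (Finset.mem_filter.1 hp).2⟩, ?_, sort_hookLengths p⟩
    simp only [RR, Finset.mem_filter, Finset.mem_univ, true_and, sort_hookLengths]
    exact isChain_hookLengths p
  rw [← card_boxPartitions_self, card_boxPartitions_eq_card_symbols,
    card_eq_sum_card_fiberwise fun p hp => hooks_mem hp, sum_image sort_injOn]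
  refine sum_congr rfl fun π hπ => ?_
  have parts_sum : (π.parts.sort (· ≥ ·)).sum = m := by
    rw [← Multiset.sum_coe, Multiset.sort_eq, π.parts_sum]
  have le_m (a : ℕ) (ha : a ∈ π.parts.sort (· ≥ ·)) : a ≤ m :=
    π.le_of_mem_parts ((Multiset.mem_sort _).1 ha)
  rw [filter_filter, ← card_hookLengths_eq_alladiWeight (Finset.mem_filter.1 hπ).2 le_m le_m]
  exact congrArg _ (filter_congr fun p _ => ⟨fun h => ⟨h ▸ parts_sum, h⟩, And.right⟩)

theorem stmt_14 :
    (PowerSeries.mk (fun m =>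
        ∑ π ∈ Finset.univ.filter (fun π : Nat.Partition m =>
            List.Chain' (fun a b => b + 2 ≤ a) (π.parts.sort (· ≥ ·))),
          (alladiWeight (π.parts.sort (· ≥ ·)) : ℚ)) : PowerSeries ℚ)
    = PowerSeries.mk (fun m => (Fintype.card (Nat.Partition m) : ℚ)) := by
  ext m
  simp only [PowerSeries.coeff_mk]
  rw [← Nat.cast_sum]
  convert congrArg Nat.cast (sum_alladiWeight_eq_card m)
  exact Iff.rfl
end
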